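/- Let p, q, m, n be positive integers such that m·n is coprime to γ(p,q) = |det Δ_{p,q}|. Then the image of the fold monomorphism ι : K(p,q) → K(mp,nq) is a direct summand of K(mp,nq): there exists a subgroup H ≤ K(mp,nq) such that K(mp,nq) is the internal direct sum of ι(K(p,q)) and H. In other words, G(p,q) is realized as a direct summand of G(mp,nq). -/

import Mathlib

open scoped BigOperators

/-- `v` lies in the open rectangle `Γ(p,q) = (0,p) × (0,q) ∩ ℤ²`. -/
def InRect (p q : ℤ) (v : ℤ × ℤ) : Prop :=
  0 < v.1 ∧ v.1 < p ∧ 0 < v.2 ∧ v.2 < q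

/-- `ψ : ℤ² → ℝ/ℤ` belongs to `K(p,q)`, the realization of the sandpile group
`G(p,q)`: it vanishes outside `Γ(p,q)` and satisfies
`4·ψ(v) = Σ_{|w−v|=1} ψ(w)` for all `v ∈ Γ(p,q)`. -/
def IsK (p q : ℤ) (ψ : ℤ × ℤ → AddCircle (1 : ℝ)) : Prop :=
  (∀ v, ¬ InRect p q v → ψ v = 0) ∧
  ∀ v, InRect p q v → (4 : ℤ) • ψ v =
    ψ (v.1 + 1, v.2) + ψ (v.1 - 1, v.2) + ψ (v.1, v.2 + 1) + ψ (v.1, v.2 - 1)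

/-- `σ_p(x) = x − kp` if `k = ⌊x/p⌋` is even and `(k+1)p − x` if `k` is odd. -/
def sigmaFold (p x : ℤ) : ℤ :=
  if Even (x / p) then x - x / p * p else (x / p + 1) * p - x

open Classical in
/-- The fold map `ι : K(p,q) → K(P,Q)` (with `P = mp`, `Q = nq`):
`ι(ψ)(x,y) = (−1)^{⌊x/p⌋+⌊y/q⌋} ψ(σ_p(x), σ_q(y))` on `Γ(P,Q)` and `0` outside. -/
noncomputable def foldMap (p q P Q : ℤ) (ψ : ℤ × ℤ → AddCircle (1 : ℝ)) :
    ℤ × ℤ → AddCircle (1 : ℝ) :=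
  fun v => if InRect P Q v then
      ((if Even (v.1 / p + v.2 / q) then (1 : ℤ) else -1)) •
        ψ (sigmaFold p v.1, sigmaFold q v.2)
    else 0

/-- `μ_{p,k}(x) = kp + x` if `k` is even and `(k+1)p − x` if `k` is odd. -/
def muFold (p k x : ℤ) : ℤ := if Even k then k * p + x else (k + 1) * p - x

open Classical in
/-- The dual map `π : K(mp,nq) → K(p,q)`:
`π(ψ)(x,y) = Σ_{k<m} Σ_{l<n} (−1)^{k+l} ψ(μ_{p,k}(x), μ_{q,l}(y))` on `Γ(p,q)`
and `0` outside. -/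
noncomputable def dualMap (p q : ℤ) (m n : ℕ) (ψ : ℤ × ℤ → AddCircle (1 : ℝ)) :
    ℤ × ℤ → AddCircle (1 : ℝ) :=
  fun v => if InRect p q v then
      ∑ k ∈ Finset.range m, ∑ l ∈ Finset.range n,
        ((-1 : ℤ) ^ (k + l)) • ψ (muFold p k v.1, muFold q l v.2)
    else 0

/-- The lattice points of the open rectangle `(0,p) × (0,q)`, as a finset of `ℤ²`. -/
noncomputable def rectPts (p q : ℕ) : Finset (ℤ × ℤ) :=
  Finset.Ioo (0 : ℤ) (p : ℤ) ×ˢ Finset.Ioo (0 : ℤ) (q : ℤ)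

open Classical in
/-- The reduced Laplacian `Δ_{p,q}` of the rectangle: `4` on the diagonal, `-1`
between lattice neighbors (points at Euclidean distance `1`), `0` otherwise. -/
noncomputable def rectLap (p q : ℕ) : Matrix (rectPts p q) (rectPts p q) ℤ :=
  fun v w => if v = w then 4
    else if ((v : ℤ × ℤ).1 - (w : ℤ × ℤ).1) ^ 2 +
            ((v : ℤ × ℤ).2 - (w : ℤ × ℤ).2) ^ 2 = 1 then -1 else 0

/-- `γ(p,q) = |det Δ_{p,q}|`, the order of the sandpile group `G(p,q)`, equal to
the number of spanning trees of the rectangular grid graph. -/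
noncomputable def gammaRect (p q : ℕ) : ℤ := |(rectLap p q).det|

/-- `K(p,q)` as an additive subgroup of the group of all functions `ℤ² → ℝ/ℤ`. -/
noncomputable def Ksub (p q : ℤ) : AddSubgroup ((ℤ × ℤ) → AddCircle (1 : ℝ)) where
  carrier := {ψ | IsK p q ψ}
  zero_mem' := ⟨fun v _ => rfl, fun v _ => by simp⟩
  add_mem' := by
    rintro a b ⟨ha0, ha⟩ ⟨hb0, hb⟩
    refine ⟨fun v hv => by simp [ha0 v hv, hb0 v hv], fun v hv => ?_⟩
    have := ha v hv
    have := hb v hv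
    simp only [Pi.add_apply, smul_add]
    rw [ha v hv, hb v hv]
    abel
  neg_mem' := by
    rintro a ⟨ha0, ha⟩
    refine ⟨fun v hv => by simp [ha0 v hv], fun v hv => ?_⟩
    simp only [Pi.neg_apply, smul_neg]
    rw [ha v hv]
    abel

/-!
Extending `ψ ∈ K(p,q)` by odd reflections across the lines `x ∈ pℤ` and `y ∈ qℤ` gives a function
on `ℤ²` that satisfies `4ψ(v) = Σ_{|w-v|=1} ψ(w)` everywhere and vanishes on those lines, so its
restriction `ι ψ` to `Γ(mp,nq)` lies in `K(mp,nq)`. Conversely the alternating sum `π` over the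
`m × n` blocks maps `K(mp,nq)` to `K(p,q)` (on the boundary of `Γ(p,q)` it telescopes to `0`), and
`π ∘ ι = mn`. Multiplying `Δ_{p,q} ψ = 0` by the adjugate shows that `γ(p,q)` kills `K(p,q)`, so
if `a·mn ≡ 1 mod γ(p,q)` then `a·π` is a retraction of `ι`, and `ker (a·π)` is a complement of
its image.
-/

open Finset

lemma ite_even_smul {M : Type*} [AddCommGroup M] (k : ℤ) (x : M) :
    (if Even k then (1 : ℤ) else -1) • x = k.negOnePow • x := by
  rcases Int.even_or_odd k with h | h
  · simp [h, Int.negOnePow_even]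
  · simp [Int.not_even_iff_odd.mpr h, Int.negOnePow_odd _ h]

section Fold

variable {p : ℤ}

lemma sigmaFold_eq_emod (p x : ℤ) :
    sigmaFold p x = if Even (x / p) then x % p else p - x % p := by
  unfold sigmaFold
  split <;> rw [Int.emod_def] <;> ring

lemma sigmaFold_nonneg_and_le (hp : 0 < p) (x : ℤ) : 0 ≤ sigmaFold p x ∧ sigmaFold p x ≤ p := by
  have := Int.emod_nonneg x hp.ne'
  have := Int.emod_lt_of_pos x hp
  rw [sigmaFold_eq_emod]
  split <;> omega

lemma sigmaFold_of_dvd {x : ℤ} (h : p ∣ x) : sigmaFold p x = 0 ∨ sigmaFold p x = p := by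
  rw [sigmaFold_eq_emod, Int.emod_eq_zero_of_dvd h]
  split <;> omega

lemma sigmaFold_pos_and_lt (hp : 0 < p) {x : ℤ} (h : ¬ p ∣ x) :
    0 < sigmaFold p x ∧ sigmaFold p x < p := by
  have := Int.emod_nonneg x hp.ne'
  have := Int.emod_lt_of_pos x hp
  have : x % p ≠ 0 := fun h' => h (Int.dvd_of_emod_eq_zero h')
  rw [sigmaFold_eq_emod]
  split <;> omega

lemma muFold_ediv_sigmaFold (p x : ℤ) : muFold p (x / p) (sigmaFold p x) = x := by
  unfold muFold sigmaFold
  split_ifs <;> ring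

lemma ediv_muFold_and_sigmaFold_muFold (k : ℤ) {x : ℤ} (h0 : 0 < x) (h1 : x < p) :
    muFold p k x / p = k ∧ sigmaFold p (muFold p k x) = x := by
  have hp : p ≠ 0 := by omega
  have hdiv : ∀ r, 0 ≤ r → r < p → (k * p + r) / p = k := fun r hr0 hr1 => by
    rw [add_comm, Int.add_mul_ediv_right _ _ hp, Int.ediv_eq_zero_of_lt hr0 hr1, zero_add]
  unfold muFold
  split_ifs with hk
  · simp [sigmaFold, hdiv x h0.le h1, hk]
  · have e : (k + 1) * p - x = k * p + (p - x) := by ring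
    simp only [e, sigmaFold, hdiv (p - x) (by omega) (by omega), hk, if_false, true_and]
    ring

lemma muFold_dvd_of_eq_zero_or_eq (k : ℤ) {x : ℤ} (hx : x = 0 ∨ x = p) : p ∣ muFold p k x := by
  unfold muFold
  rcases hx with rfl | rfl <;> split_ifs
  exacts [⟨k, by ring⟩, ⟨k + 1, by ring⟩, ⟨k + 1, by ring⟩, ⟨k, by ring⟩]

lemma exists_muFold_eq (hp : 0 < p) (y : ℤ) :
    ∃ k s, 0 ≤ s ∧ s ≤ p ∧ muFold p k s = y :=
  ⟨y / p, sigmaFold p y, (sigmaFold_nonneg_and_le hp y).1, (sigmaFold_nonneg_and_le hp y).2,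
    muFold_ediv_sigmaFold p y⟩

lemma two_mul_mul_sub_muFold (j k s : ℤ) :
    2 * j * p - muFold p k s = muFold p (2 * j - 1 - k) s := by
  have : Even (2 * j - 1 - k) ↔ ¬ Even k := by
    rw [← Int.not_odd_iff_even, Int.odd_sub, Int.odd_sub]
    simp [Int.not_odd_iff_even, Int.not_even_iff_odd]
  unfold muFold
  by_cases hk : Even k
  · rw [if_pos hk, if_neg (by tauto)]; ring
  · rw [if_neg hk, if_pos (by tauto)]; ring

lemma muFold_add_one_add_muFold_sub_one {M : Type*} [AddCommGroup M] (f : ℤ → M) (k x : ℤ) :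
    f (muFold p k x + 1) + f (muFold p k x - 1) =
      f (muFold p k (x + 1)) + f (muFold p k (x - 1)) := by
  unfold muFold
  split_ifs
  · ring_nf
  · rw [add_comm]; ring_nf

lemma muFold_pos_and_lt {m : ℕ} {k : ℕ} (hk : k < m) {x : ℤ} (h0 : 0 < x) (h1 : x < p) :
    0 < muFold p k x ∧ muFold p k x < m * p := by
  have hkm : (k : ℤ) + 1 ≤ m := by exact_mod_cast hk
  have : ((k : ℤ) + 1) * p ≤ m * p := mul_le_mul_of_nonneg_right hkm (by omega)
  have : 0 ≤ (k : ℤ) * p := mul_nonneg (Int.natCast_nonneg k) (by omega)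
  unfold muFold
  split <;> constructor <;> nlinarith

end Fold

section OddExtension

variable {M : Type*} [AddCommGroup M] {p : ℤ} {g : ℤ → M}

-- The `2p`-periodic extension of `g|[0,p]` that is odd about every multiple of `p`.
def oddExt (p : ℤ) (g : ℤ → M) (x : ℤ) : M := (x / p).negOnePow • g (sigmaFold p x)

lemma oddExt_of_dvd (hg0 : g 0 = 0) (hgp : g p = 0) {x : ℤ} (h : p ∣ x) : oddExt p g x = 0 := by
  rcases sigmaFold_of_dvd h with h' | h' <;> simp [oddExt, h', hg0, hgp]

lemma oddExt_muFold (hg0 : g 0 = 0) (hgp : g p = 0) (k : ℤ) {x : ℤ} (h0 : 0 ≤ x) (h1 : x ≤ p) :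
    oddExt p g (muFold p k x) = k.negOnePow • g x := by
  by_cases hx : x = 0 ∨ x = p
  · rw [oddExt_of_dvd hg0 hgp (muFold_dvd_of_eq_zero_or_eq k hx)]
    rcases hx with rfl | rfl <;> simp [hg0, hgp]
  · obtain ⟨hdiv, hsigma⟩ :=
      ediv_muFold_and_sigmaFold_muFold k (p := p) (x := x) (by omega) (by omega)
    rw [oddExt, hdiv, hsigma]

variable (hp : 0 < p) (hg0 : g 0 = 0) (hgp : g p = 0)
include hp hg0 hgp

lemma oddExt_two_mul_mul_sub (j y : ℤ) : oddExt p g (2 * j * p - y) = -oddExt p g y := by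
  obtain ⟨k, s, hs0, hsp, rfl⟩ := exists_muFold_eq hp y
  have hsign : (2 * j - 1 - k).negOnePow = -k.negOnePow := by
    simp [Int.negOnePow_sub, Int.negOnePow_two_mul]
  rw [two_mul_mul_sub_muFold, oddExt_muFold hg0 hgp _ hs0 hsp, oddExt_muFold hg0 hgp _ hs0 hsp,
    hsign, Units.neg_smul]

lemma oddExt_add_one_add_oddExt_sub_one_of_dvd {x : ℤ} (h : p ∣ x) :
    oddExt p g (x + 1) + oddExt p g (x - 1) = 0 := by
  obtain ⟨j, rfl⟩ := h
  rw [show p * j - 1 = 2 * j * p - (p * j + 1) by ring, oddExt_two_mul_mul_sub hp hg0 hgp,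
    add_neg_cancel]

lemma oddExt_add_one_add_oddExt_sub_one {x : ℤ} (h : ¬ p ∣ x) :
    oddExt p g (x + 1) + oddExt p g (x - 1) =
      (x / p).negOnePow • (g (sigmaFold p x + 1) + g (sigmaFold p x - 1)) := by
  obtain ⟨hs0, hsp⟩ := sigmaFold_pos_and_lt hp h
  conv_lhs => rw [← muFold_ediv_sigmaFold p x]
  rw [muFold_add_one_add_muFold_sub_one, oddExt_muFold hg0 hgp _ (by omega) (by omega),
    oddExt_muFold hg0 hgp _ (by omega) (by omega), smul_add]

end OddExtension

def neighborSum {M : Type*} [AddCommGroup M] (ψ : ℤ × ℤ → M) (v : ℤ × ℤ) : M :=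
  ψ (v.1 + 1, v.2) + ψ (v.1 - 1, v.2) + ψ (v.1, v.2 + 1) + ψ (v.1, v.2 - 1)

-- `foldMap` and `dualMap` both have this shape, with `Φ = foldExt p q ψ` resp.
-- `Φ = unfoldSum p q m n ψ`.
open Classical in
lemma isK_ite {P Q : ℤ} {Φ : ℤ × ℤ → AddCircle (1 : ℝ)}
    (hΦ : ∀ v, InRect P Q v → (4 : ℤ) • Φ v = neighborSum Φ v)
    (hbdry : ∀ x y, x = 0 ∨ x = P ∨ y = 0 ∨ y = Q → Φ (x, y) = 0) :
    IsK P Q (fun v => if InRect P Q v then Φ v else 0) := by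
  refine ⟨fun v hv => if_neg hv, ?_⟩
  rintro ⟨x, y⟩ hv
  have hclosed : ∀ a b, 0 ≤ a → a ≤ P → 0 ≤ b → b ≤ Q →
      (if InRect P Q (a, b) then Φ (a, b) else 0) = Φ (a, b) := fun a b h1 h2 h3 h4 => by
    split_ifs with h
    · rfl
    · exact (hbdry a b (by simp only [InRect] at h; omega)).symm
  obtain ⟨h1, h2, h3, h4⟩ := hv
  simp (disch := omega) only [hclosed]
  exact hΦ _ ⟨h1, h2, h3, h4⟩

section FoldExtension

variable {p q : ℤ} {ψ : ℤ × ℤ → AddCircle (1 : ℝ)}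

def foldExt (p q : ℤ) (ψ : ℤ × ℤ → AddCircle (1 : ℝ)) (v : ℤ × ℤ) : AddCircle (1 : ℝ) :=
  (if Even (v.1 / p + v.2 / q) then (1 : ℤ) else -1) • ψ (sigmaFold p v.1, sigmaFold q v.2)

lemma foldExt_eq_smul_oddExt_fst (x y : ℤ) :
    foldExt p q ψ (x, y) = (y / q).negOnePow • oddExt p (fun s => ψ (s, sigmaFold q y)) x := by
  rw [foldExt, oddExt, ite_even_smul, Int.negOnePow_add, mul_comm, mul_smul]

lemma foldExt_eq_smul_oddExt_snd (x y : ℤ) :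
    foldExt p q ψ (x, y) = (x / p).negOnePow • oddExt q (fun t => ψ (sigmaFold p x, t)) y := by
  rw [foldExt, oddExt, ite_even_smul, Int.negOnePow_add, mul_smul]

variable (hψ : IsK p q ψ)
include hψ

lemma foldExt_of_dvd_fst {x : ℤ} (hx : p ∣ x) (y : ℤ) : foldExt p q ψ (x, y) = 0 := by
  rw [foldExt, hψ.1 _ (by rcases sigmaFold_of_dvd hx with h | h <;> simp [InRect, h]), smul_zero]

lemma foldExt_of_dvd_snd (x : ℤ) {y : ℤ} (hy : q ∣ y) : foldExt p q ψ (x, y) = 0 := by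
  rw [foldExt, hψ.1 _ (by rcases sigmaFold_of_dvd hy with h | h <;> simp [InRect, h]), smul_zero]

lemma foldExt_harmonic (hp : 0 < p) (hq : 0 < q) (x y : ℤ) :
    (4 : ℤ) • foldExt p q ψ (x, y) = neighborSum (foldExt p q ψ) (x, y) := by
  have hvan : ∀ s t, ¬ (0 < s ∧ s < p ∧ 0 < t ∧ t < q) → ψ (s, t) = 0 := fun s t h => hψ.1 _ h
  have hg0 : ∀ t, ψ (0, t) = 0 := fun t => hvan 0 t (by omega)
  have hgp : ∀ t, ψ (p, t) = 0 := fun t => hvan p t (by omega)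
  have hh0 : ∀ s, ψ (s, 0) = 0 := fun s => hvan s 0 (by omega)
  have hhq : ∀ s, ψ (s, q) = 0 := fun s => hvan s q (by omega)
  have hsumx : foldExt p q ψ (x + 1, y) + foldExt p q ψ (x - 1, y) =
      (y / q).negOnePow • (oddExt p (fun s => ψ (s, sigmaFold q y)) (x + 1) +
        oddExt p (fun s => ψ (s, sigmaFold q y)) (x - 1)) := by
    rw [foldExt_eq_smul_oddExt_fst, foldExt_eq_smul_oddExt_fst, smul_add]
  have hsumy : foldExt p q ψ (x, y + 1) + foldExt p q ψ (x, y - 1) =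
      (x / p).negOnePow • (oddExt q (fun t => ψ (sigmaFold p x, t)) (y + 1) +
        oddExt q (fun t => ψ (sigmaFold p x, t)) (y - 1)) := by
    rw [foldExt_eq_smul_oddExt_snd, foldExt_eq_smul_oddExt_snd, smul_add]
  rw [neighborSum]
  by_cases hx : p ∣ x
  · rw [hsumx, oddExt_add_one_add_oddExt_sub_one_of_dvd hp (hg0 _) (hgp _) hx,
      foldExt_of_dvd_fst hψ hx, foldExt_of_dvd_fst hψ hx, foldExt_of_dvd_fst hψ hx]
    simp
  by_cases hy : q ∣ y
  · rw [add_assoc, hsumy, oddExt_add_one_add_oddExt_sub_one_of_dvd hq (hh0 _) (hhq _) hy,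
      foldExt_of_dvd_snd hψ _ hy, foldExt_of_dvd_snd hψ _ hy, foldExt_of_dvd_snd hψ _ hy]
    simp
  obtain ⟨hs0, hsp⟩ := sigmaFold_pos_and_lt hp hx
  obtain ⟨ht0, htq⟩ := sigmaFold_pos_and_lt hq hy
  rw [add_assoc, hsumx, hsumy, oddExt_add_one_add_oddExt_sub_one hp (hg0 _) (hgp _) hx,
    oddExt_add_one_add_oddExt_sub_one hq (hh0 _) (hhq _) hy, foldExt_eq_smul_oddExt_fst, oddExt,
    smul_comm (4 : ℤ), smul_comm (4 : ℤ), hψ.2 _ ⟨hs0, hsp, ht0, htq⟩]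
  simp only [smul_add, add_assoc, smul_comm (y / q).negOnePow (x / p).negOnePow]

end FoldExtension

lemma foldMap_mem_Ksub {p q P Q : ℤ} (hp : 0 < p) (hq : 0 < q) (hP : p ∣ P) (hQ : q ∣ Q)
    {ψ : ℤ × ℤ → AddCircle (1 : ℝ)} (hψ : ψ ∈ Ksub p q) : foldMap p q P Q ψ ∈ Ksub P Q := by
  refine isK_ite (fun v _ => foldExt_harmonic hψ hp hq v.1 v.2) fun x y h => ?_
  rcases h with rfl | rfl | rfl | rfl
  exacts [foldExt_of_dvd_fst hψ (dvd_zero p) y, foldExt_of_dvd_fst hψ hP y,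
    foldExt_of_dvd_snd hψ x (dvd_zero q), foldExt_of_dvd_snd hψ x hQ]

section AlternatingSum

variable {M : Type*} [AddCommGroup M] {p : ℤ} {m : ℕ} {f : ℤ → M}

lemma sum_range_neg_one_pow_smul_muFold_zero (hf0 : f 0 = 0) (hfm : f (m * p) = 0) :
    ∑ k ∈ range m, ((-1 : ℤ) ^ k) • f (muFold p k 0) = 0 := by
  let b : ℕ → M := fun k => if Even k then f (k * p) else 0
  have hterm : ∀ k ∈ range m, ((-1 : ℤ) ^ k) • f (muFold p k 0) = b k - b (k + 1) := by
    intro k _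
    rcases Nat.even_or_odd k with hk | hk
    · simp [b, muFold, hk, Nat.even_add_one, hk.neg_one_pow]
    · simp [b, muFold, Nat.not_even_iff_odd.mpr hk, Nat.even_add_one, hk.neg_one_pow]
  rw [sum_congr rfl hterm, sum_range_sub']
  simp [b, hf0, hfm]

lemma sum_range_neg_one_pow_smul_muFold_self (hfm : f (m * p) = 0) :
    ∑ k ∈ range m, ((-1 : ℤ) ^ k) • f (muFold p k p) = 0 := by
  let b : ℕ → M := fun k => if Even k then 0 else f (k * p)
  have hterm : ∀ k ∈ range m, ((-1 : ℤ) ^ k) • f (muFold p k p) = b (k + 1) - b k := by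
    intro k _
    rcases Nat.even_or_odd k with hk | hk
    · simp [b, muFold, hk, Nat.even_add_one, hk.neg_one_pow, add_mul]
    · simp [b, muFold, Nat.not_even_iff_odd.mpr hk, Nat.even_add_one, hk.neg_one_pow, add_one_mul]
  rw [sum_congr rfl hterm, sum_range_sub]
  simp [b, hfm]

end AlternatingSum

section Unfold

variable {p q : ℤ} {m n : ℕ} {ψ : ℤ × ℤ → AddCircle (1 : ℝ)}

def unfoldSum (p q : ℤ) (m n : ℕ) (ψ : ℤ × ℤ → AddCircle (1 : ℝ)) (v : ℤ × ℤ) :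
    AddCircle (1 : ℝ) :=
  ∑ k ∈ range m, ∑ l ∈ range n, ((-1 : ℤ) ^ (k + l)) • ψ (muFold p k v.1, muFold q l v.2)

lemma unfoldSum_eq_sum_fst (x y : ℤ) : unfoldSum p q m n ψ (x, y) =
    ∑ l ∈ range n, ((-1 : ℤ) ^ l) •
      ∑ k ∈ range m, ((-1 : ℤ) ^ k) • ψ (muFold p k x, muFold q l y) := by
  rw [unfoldSum, sum_comm]
  simp only [smul_sum, smul_smul, ← pow_add, add_comm]

lemma unfoldSum_eq_sum_snd (x y : ℤ) : unfoldSum p q m n ψ (x, y) =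
    ∑ k ∈ range m, ((-1 : ℤ) ^ k) •
      ∑ l ∈ range n, ((-1 : ℤ) ^ l) • ψ (muFold p k x, muFold q l y) := by
  simp only [unfoldSum, smul_sum, smul_smul, ← pow_add]

variable (hψ : IsK (m * p) (n * q) ψ)
include hψ

lemma unfoldSum_of_fst {x : ℤ} (hx : x = 0 ∨ x = p) (y : ℤ) : unfoldSum p q m n ψ (x, y) = 0 := by
  have hvan : ∀ t, ψ (0, t) = 0 ∧ ψ (m * p, t) = 0 :=
    fun t => ⟨hψ.1 _ (by simp [InRect]), hψ.1 _ (by simp [InRect])⟩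
  rw [unfoldSum_eq_sum_fst]
  refine sum_eq_zero fun l _ => ?_
  rcases hx with rfl | rfl
  · rw [sum_range_neg_one_pow_smul_muFold_zero (f := fun s => ψ (s, _)) (hvan _).1 (hvan _).2,
      smul_zero]
  · rw [sum_range_neg_one_pow_smul_muFold_self (f := fun s => ψ (s, _)) (hvan _).2, smul_zero]

lemma unfoldSum_of_snd (x : ℤ) {y : ℤ} (hy : y = 0 ∨ y = q) : unfoldSum p q m n ψ (x, y) = 0 := by
  have hvan : ∀ s, ψ (s, 0) = 0 ∧ ψ (s, n * q) = 0 :=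
    fun s => ⟨hψ.1 _ (by simp [InRect]), hψ.1 _ (by simp [InRect])⟩
  rw [unfoldSum_eq_sum_snd]
  refine sum_eq_zero fun k _ => ?_
  rcases hy with rfl | rfl
  · rw [sum_range_neg_one_pow_smul_muFold_zero (f := fun t => ψ (_, t)) (hvan _).1 (hvan _).2,
      smul_zero]
  · rw [sum_range_neg_one_pow_smul_muFold_self (f := fun t => ψ (_, t)) (hvan _).2, smul_zero]

lemma unfoldSum_harmonic {v : ℤ × ℤ} (hv : InRect p q v) :
    (4 : ℤ) • unfoldSum p q m n ψ v = neighborSum (unfoldSum p q m n ψ) v := by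
  obtain ⟨h1, h2, h3, h4⟩ := hv
  simp only [unfoldSum, neighborSum, smul_sum, ← sum_add_distrib, ← smul_add]
  refine sum_congr rfl fun k hk => sum_congr rfl fun l hl => ?_
  have hx := muFold_pos_and_lt (mem_range.mp hk) h1 h2
  have hy := muFold_pos_and_lt (p := q) (mem_range.mp hl) h3 h4
  rw [smul_comm, hψ.2 _ ⟨hx.1, hx.2, hy.1, hy.2⟩]
  dsimp only
  rw [muFold_add_one_add_muFold_sub_one (fun s => ψ (s, muFold q l v.2)), add_assoc,
    muFold_add_one_add_muFold_sub_one (fun t => ψ (muFold p k v.1, t)), ← add_assoc]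

end Unfold

lemma dualMap_mem_Ksub {p q : ℤ} {m n : ℕ} {ψ : ℤ × ℤ → AddCircle (1 : ℝ)}
    (hψ : ψ ∈ Ksub (m * p) (n * q)) : dualMap p q m n ψ ∈ Ksub p q := by
  refine isK_ite (fun v hv => unfoldSum_harmonic hψ hv) fun x y h => ?_
  rcases h with h | h | h | h
  exacts [unfoldSum_of_fst hψ (.inl h) y, unfoldSum_of_fst hψ (.inr h) y,
    unfoldSum_of_snd hψ x (.inl h), unfoldSum_of_snd hψ x (.inr h)]

lemma dualMap_foldMap {p q : ℤ} (m n : ℕ) {ψ : ℤ × ℤ → AddCircle (1 : ℝ)} (hψ : IsK p q ψ) :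
    dualMap p q m n (foldMap p q (m * p) (n * q) ψ) = ((m : ℤ) * n) • ψ := by
  funext v
  by_cases hv : InRect p q v
  · obtain ⟨h1, h2, h3, h4⟩ := hv
    have hterm : ∀ k ∈ range m, ∀ l ∈ range n, ((-1 : ℤ) ^ (k + l)) •
        foldMap p q (m * p) (n * q) ψ (muFold p k v.1, muFold q l v.2) = ψ v := by
      intro k hk l hl
      have hx := muFold_pos_and_lt (mem_range.mp hk) h1 h2
      have hy := muFold_pos_and_lt (p := q) (mem_range.mp hl) h3 h4
      obtain ⟨hdx, hsx⟩ := ediv_muFold_and_sigmaFold_muFold (p := p) k h1 h2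
      obtain ⟨hdy, hsy⟩ := ediv_muFold_and_sigmaFold_muFold (p := q) l h3 h4
      rw [foldMap, if_pos ⟨hx.1, hx.2, hy.1, hy.2⟩]
      dsimp only
      rw [hdx, hsx, hdy, hsy, ite_even_smul, ← Nat.cast_add, ← Int.coe_negOnePow_natCast,
        ← Units.smul_def, smul_smul, Int.units_mul_self, one_smul]
    rw [dualMap, if_pos ⟨h1, h2, h3, h4⟩, sum_congr rfl fun k hk => sum_congr rfl (hterm k hk)]
    simp only [sum_const, card_range, smul_smul]
    exact_mod_cast (natCast_zsmul (ψ v) (m * n)).symm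
  · simp [dualMap, hv, hψ.1 v hv]

def neighbors (v : ℤ × ℤ) : Finset (ℤ × ℤ) :=
  {(v.1 + 1, v.2), (v.1 - 1, v.2), (v.1, v.2 + 1), (v.1, v.2 - 1)}

lemma sum_neighbors {M : Type*} [AddCommGroup M] (ψ : ℤ × ℤ → M) (v : ℤ × ℤ) :
    ∑ w ∈ neighbors v, ψ w = neighborSum ψ v := by
  rw [neighbors, sum_insert, sum_insert, sum_insert, sum_singleton, neighborSum]
  · abel
  all_goals simp only [mem_insert, mem_singleton, Prod.ext_iff]; omega

lemma sq_add_sq_eq_one_iff_mem_neighbors (v w : ℤ × ℤ) :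
    (v.1 - w.1) ^ 2 + (v.2 - w.2) ^ 2 = 1 ↔ w ∈ neighbors v := by
  simp only [neighbors, mem_insert, mem_singleton, Prod.ext_iff]
  constructor
  · intro h
    have ha : -1 ≤ v.1 - w.1 ∧ v.1 - w.1 ≤ 1 := by constructor <;> nlinarith
    have hb : -1 ≤ v.2 - w.2 ∧ v.2 - w.2 ≤ 1 := by constructor <;> nlinarith
    obtain ⟨ha0, ha1⟩ := ha
    obtain ⟨hb0, hb1⟩ := hb
    generalize hd1 : v.1 - w.1 = d1 at *
    generalize hd2 : v.2 - w.2 = d2 at *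
    interval_cases d1 <;> interval_cases d2 <;> omega
  · rintro (⟨h1, h2⟩ | ⟨h1, h2⟩ | ⟨h1, h2⟩ | ⟨h1, h2⟩) <;> rw [h1, h2] <;> ring

lemma mem_rectPts {p q : ℕ} {v : ℤ × ℤ} : v ∈ rectPts p q ↔ InRect p q v := by
  simp [rectPts, InRect, and_assoc]

lemma rectLap_eq (p q : ℕ) (v w : rectPts p q) :
    rectLap p q v w = (if v = w then 4 else 0) - if (w : ℤ × ℤ) ∈ neighbors v then 1 else 0 := by
  simp only [rectLap, ← sq_add_sq_eq_one_iff_mem_neighbors]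
  split_ifs with h1 h2 <;> subst_vars <;> simp_all

lemma sum_rectLap_smul {p q : ℕ} {ψ : ℤ × ℤ → AddCircle (1 : ℝ)}
    (hψ : ∀ v, ¬ InRect p q v → ψ v = 0) (v : rectPts p q) :
    ∑ w, rectLap p q v w • ψ w = (4 : ℤ) • ψ v - neighborSum ψ v := by
  simp only [rectLap_eq, sub_smul, sum_sub_distrib, ite_smul, one_smul, zero_smul,
    sum_ite_eq, mem_univ, if_true]
  congr 1
  rw [sum_coe_sort (rectPts p q) fun w => if w ∈ neighbors v then ψ w else 0, sum_ite_mem,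
    ← sum_neighbors]
  refine sum_subset inter_subset_right fun w hw hw' => hψ w fun hin => hw' ?_
  exact mem_inter.mpr ⟨mem_rectPts.mpr hin, hw⟩

lemma Matrix.det_smul_eq_zero_of_sum_smul_eq_zero {ι R M : Type*} [Fintype ι] [DecidableEq ι]
    [CommRing R] [AddCommGroup M] [Module R M] (A : Matrix ι ι R) {x : ι → M}
    (hx : ∀ i, ∑ j, A i j • x j = 0) (i : ι) : A.det • x i = 0 :=
  calc A.det • x i = ∑ j, (A.adjugate * A) i j • x j := by
        simp [Matrix.adjugate_mul, Matrix.one_apply]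
    _ = ∑ k, A.adjugate i k • ∑ j, A k j • x j := by
        simp only [Matrix.mul_apply, sum_smul, smul_sum, smul_smul]
        exact sum_comm
    _ = 0 := by simp [hx]

lemma gammaRect_smul_eq_zero {p q : ℕ} {ψ : ℤ × ℤ → AddCircle (1 : ℝ)} (hψ : IsK p q ψ) :
    gammaRect p q • ψ = 0 := by
  classical
  have hdet : ∀ v : rectPts p q, (rectLap p q).det • ψ v = 0 :=
    Matrix.det_smul_eq_zero_of_sum_smul_eq_zero _ fun v => by
      rw [sum_rectLap_smul hψ.1, sub_eq_zero]
      exact hψ.2 v (mem_rectPts.mp v.2)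
  funext v
  by_cases hv : InRect p q v
  · rcases abs_choice (rectLap p q).det with h | h <;>
      simp [gammaRect, h, hdet ⟨v, mem_rectPts.mpr hv⟩]
  · simp [hψ.1 v hv]

theorem exists_complement_of_retraction {G : Type*} [AddCommGroup G] (A B : AddSubgroup G)
    (f r : G →+ G) (hf : ∀ a ∈ A, f a ∈ B) (hr : ∀ b ∈ B, r b ∈ A) (hrf : ∀ a ∈ A, r (f a) = a) :
    ∃ H : AddSubgroup G, H ≤ B ∧
      (∀ x ∈ B, ∃ a, a ∈ A ∧ ∃ h ∈ H, x = f a + h) ∧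
      (∀ a₁ a₂, a₁ ∈ A → a₂ ∈ A → ∀ h₁ ∈ H, ∀ h₂ ∈ H,
        f a₁ + h₁ = f a₂ + h₂ → f a₁ = f a₂ ∧ h₁ = h₂) := by
  refine ⟨B ⊓ r.ker, inf_le_left, fun x hx => ?_, fun a₁ a₂ ha₁ ha₂ h₁ hh₁ h₂ hh₂ heq => ?_⟩
  · refine ⟨r x, hr x hx, x - f (r x), ⟨B.sub_mem hx (hf _ (hr x hx)), ?_⟩, by abel⟩
    show r (x - f (r x)) = 0
    rw [map_sub, hrf _ (hr x hx), sub_self]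
  · have h₁0 : r h₁ = 0 := hh₁.2
    have h₂0 : r h₂ = 0 := hh₂.2
    have ha : a₁ = a₂ := by
      simpa [hrf a₁ ha₁, hrf a₂ ha₂, h₁0, h₂0] using congrArg r heq
    subst ha
    exact ⟨rfl, add_left_cancel heq⟩

noncomputable def foldHom (p q P Q : ℤ) :
    (ℤ × ℤ → AddCircle (1 : ℝ)) →+ (ℤ × ℤ → AddCircle (1 : ℝ)) :=
  AddMonoidHom.mk' (foldMap p q P Q) fun ψ φ => by
    funext v
    by_cases h : InRect P Q v <;> simp [foldMap, h, smul_add]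

noncomputable def dualHom (p q : ℤ) (m n : ℕ) :
    (ℤ × ℤ → AddCircle (1 : ℝ)) →+ (ℤ × ℤ → AddCircle (1 : ℝ)) :=
  AddMonoidHom.mk' (dualMap p q m n) fun ψ φ => by
    funext v
    by_cases h : InRect p q v <;> simp [dualMap, h, smul_add, sum_add_distrib]

theorem foldMap_image_isDirectSummand_general (p q m n : ℕ)
    (hp : 0 < p) (hq : 0 < q)
    (hco : IsCoprime ((m : ℤ) * n) (gammaRect p q)) :
    ∃ H : AddSubgroup ((ℤ × ℤ) → AddCircle (1 : ℝ)),
      H ≤ Ksub ((m : ℤ) * p) ((n : ℤ) * q) ∧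
      (∀ x ∈ Ksub ((m : ℤ) * p) ((n : ℤ) * q),
        ∃ ψ, IsK p q ψ ∧ ∃ h ∈ H,
          x = foldMap p q ((m : ℤ) * p) ((n : ℤ) * q) ψ + h) ∧
      (∀ ψ₁ ψ₂, IsK p q ψ₁ → IsK p q ψ₂ → ∀ h₁ ∈ H, ∀ h₂ ∈ H,
        foldMap p q ((m : ℤ) * p) ((n : ℤ) * q) ψ₁ + h₁ =
          foldMap p q ((m : ℤ) * p) ((n : ℤ) * q) ψ₂ + h₂ →
        foldMap p q ((m : ℤ) * p) ((n : ℤ) * q) ψ₁ =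
          foldMap p q ((m : ℤ) * p) ((n : ℤ) * q) ψ₂ ∧ h₁ = h₂) := by
  obtain ⟨a, b, hab⟩ := hco
  refine exists_complement_of_retraction (Ksub p q) (Ksub (m * p) (n * q))
    (foldHom p q (m * p) (n * q)) (a • dualHom p q m n)
    (fun ψ hψ => foldMap_mem_Ksub (by omega) (by omega) (dvd_mul_left _ _) (dvd_mul_left _ _) hψ)
    (fun x hx => (Ksub p q).zsmul_mem (dualMap_mem_Ksub hx) a) fun ψ hψ => ?_
  calc a • dualMap p q m n (foldMap p q (m * p) (n * q) ψ)
      = (a * (m * n) + b * gammaRect p q) • ψ := by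
        rw [dualMap_foldMap m n hψ, add_smul, mul_smul b, gammaRect_smul_eq_zero hψ, smul_zero,
          add_zero, smul_smul]
    _ = ψ := by rw [hab, one_smul]

/-- If `mn` is coprime to `γ(p,q)`, the image of the fold monomorphism
`ι : K(p,q) → K(mp,nq)` is a direct summand: there is a subgroup `H` of
`K(mp,nq)` such that every element of `K(mp,nq)` is uniquely the sum of an
element of `ι(K(p,q))` and an element of `H`.  In other words, `G(p,q)` is
realized as a direct summand of `G(mp,nq)`. -/
theorem foldMap_image_isDirectSummand (p q m n : ℕ)
    (hp : 0 < p) (hq : 0 < q) (hm : 0 < m) (hn : 0 < n)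
    (hco : IsCoprime ((m : ℤ) * n) (gammaRect p q)) :
    ∃ H : AddSubgroup ((ℤ × ℤ) → AddCircle (1 : ℝ)),
      H ≤ Ksub ((m : ℤ) * p) ((n : ℤ) * q) ∧
      (∀ x ∈ Ksub ((m : ℤ) * p) ((n : ℤ) * q),
        ∃ ψ, IsK p q ψ ∧ ∃ h ∈ H,
          x = foldMap p q ((m : ℤ) * p) ((n : ℤ) * q) ψ + h) ∧
      (∀ ψ₁ ψ₂, IsK p q ψ₁ → IsK p q ψ₂ → ∀ h₁ ∈ H, ∀ h₂ ∈ H,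
        foldMap p q ((m : ℤ) * p) ((n : ℤ) * q) ψ₁ + h₁ =
          foldMap p q ((m : ℤ) * p) ((n : ℤ) * q) ψ₂ + h₂ →
        foldMap p q ((m : ℤ) * p) ((n : ℤ) * q) ψ₁ =
          foldMap p q ((m : ℤ) * p) ((n : ℤ) * q) ψ₂ ∧ h₁ = h₂) :=
  foldMap_image_isDirectSummand_general p q m n hp hq hco
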